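/- Suppose the null hypothesis holds, i.e. P_{XY} = P_X × P_Y. Let (X_1,Y_1), …, (X_n,Y_n) (n ≥ 3) be i.i.d. with law P_X × P_Y, let (X_i',Y_i') be the cyclic permutation of the sample, and let θ̂: 𝒳×𝒴 → [0,1] be a fixed measurable function such that θ̂(X,Y) has an atomless distribution under P_X×P_Y. Define R̃ = n^{-1} Σ_{i=1}^n [1/2 − F₂(θ̂(X_i,Y_i))] + n^{-1} Σ_{i=1}^n [F₂(θ̂(X_i',Y_i')) − 1/2]. Then Var(R̃) = σ*²/n, where σ*² = 1/6 − 2·Cov(F₂(θ̂(X₂,Y₂)), F₂(θ̂(X₁,Y₂))) − 2·Cov(F₂(θ̂(X₂,Y₂)), F₂(θ̂(X₂,Y₃))), the covariances being computed with X₁, X₂ i.i.d. ∼ P_X and Y₁, Y₂, Y₃ i.i.d. ∼ P_Y, all mutually independent. -/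

import Mathlib

open MeasureTheory ProbabilityTheory

/-- The cyclic successor of an index. -/
def cycIdx {n : ℕ} (i : Fin n) : Fin n := ⟨(i.val + 1) % n, Nat.mod_lt _ i.pos⟩

/-- The cyclicly permuted sample: `(Xᵢ', Yᵢ') = (Xᵢ, Y_{i+1})` (indices mod `n`). -/
def cyc {X Y : Type*} {n : ℕ} (Z : Fin n → X × Y) (i : Fin n) : X × Y :=
  ((Z i).1, (Z (cycIdx i)).2)

/-- Cumulative distribution function of `θ` under the measure `m`. -/
noncomputable def cdfOf {X Y : Type*} [MeasurableSpace X] [MeasurableSpace Y]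
    (m : Measure (X × Y)) (θ : X × Y → ℝ) (t : ℝ) : ℝ := (m {z | θ z ≤ t}).toReal

/-- Covariance of two real functions under a measure. -/
noncomputable def covFn {Ω : Type*} [MeasurableSpace Ω] (m : Measure Ω) (f g : Ω → ℝ) : ℝ :=
  (∫ ω, f ω * g ω ∂m) - (∫ ω, f ω ∂m) * ∫ ω, g ω ∂m

/-- The projection statistic
`R̃ = n⁻¹ Σᵢ (1/2 − F₂(θ(Xᵢ,Yᵢ))) + n⁻¹ Σᵢ (F₂(θ(Xᵢ',Yᵢ')) − 1/2)`. -/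
noncomputable def Rtilde {X Y : Type*} {n : ℕ} (F₂ : ℝ → ℝ) (θ : X × Y → ℝ)
    (Z : Fin n → X × Y) : ℝ :=
  (n : ℝ)⁻¹ * (∑ i : Fin n, (1 / 2 - F₂ (θ (Z i))))
    + (n : ℝ)⁻¹ * ∑ i : Fin n, (F₂ (θ (cyc Z i)) - 1 / 2)

/-!
Write `G = F₂ ∘ θ` and `σ` for the cyclic shift, so that `n R̃ = A - B` with
`A = ∑ᵢ G(Xᵢ, Y_{σ i})` and `B = ∑ᵢ G(Xᵢ, Yᵢ)`. Both `A` and `B` are sums of `n` independent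
copies of `G(X, Y)`, and in `Cov(A, B)` the only correlated pairs are those sharing an `X`
(`j = i`) or a `Y` (`j = σ i`). Hence, for any fixed-point-free permutation `σ`,
`Var(A - B) = n (2 Var G - 2 Cov_X - 2 Cov_Y)`.

As `θ` is atomless, `F₂(θ)` is uniform on `[0, 1]`, so `Var G = 1/12`: the integral of `F₂ ^ m`
against the law of `θ` is the probability that the first of `m + 1` i.i.d. draws of `θ` is the
largest, which is `1 / (m + 1)` by exchangeability.
-/

open Set Function
open scoped ENNReal

section PiMeasure

variable {ι Ω : Type*} [Fintype ι] [MeasurableSpace Ω] (Q : Measure Ω) [IsProbabilityMeasure Q]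

lemma measurePreserving_eval_pair {a c : ι} (h : a ≠ c) :
    MeasurePreserving (fun x : ι → Ω => (x a, x c)) (Measure.pi fun _ => Q) (Q.prod Q) := by
  refine ⟨by fun_prop, ?_⟩
  have hind : IndepFun (fun x : ι → Ω => x a) (fun x => x c) (Measure.pi fun _ => Q) :=
    (iIndepFun_pi (X := fun _ => id) fun _ => aemeasurable_id).indepFun h
  rw [(indepFun_iff_map_prod_eq_prod_map_map (measurable_pi_apply a).aemeasurable
    (measurable_pi_apply c).aemeasurable).1 hind,
    (measurePreserving_eval _ a).map_eq, (measurePreserving_eval _ c).map_eq]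

lemma prod_self_diagonal_eq_zero [MeasurableEq Ω] [NullSingletonClass Q] :
    (Q.prod Q) (diagonal Ω) = 0 := by
  rw [Measure.prod_apply measurableSet_diagonal]
  simp [diagonal]

lemma pi_eval_eq_eval_eq_zero [MeasurableEq Ω] [NullSingletonClass Q] {a c : ι} (h : a ≠ c) :
    (Measure.pi fun _ => Q) {x | x a = x c} = 0 :=
  (measurePreserving_eval_pair Q h).measure_preimage measurableSet_diagonal.nullMeasurableSet
    |>.trans (prod_self_diagonal_eq_zero Q)

end PiMeasure

section Cdf

variable (κ : Measure ℝ)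

lemma memLp_cdf_comp {Ω : Type*} [MeasurableSpace Ω] {μ : Measure Ω} [IsFiniteMeasure μ]
    {f : Ω → ℝ} (hf : Measurable f) (p : ℝ≥0∞) : MemLp (fun ω => cdf κ (f ω)) p μ :=
  .of_bound ((cdf κ).mono.measurable.comp hf).aestronglyMeasurable 1 <| ae_of_all _ fun ω => by
    rw [Real.norm_of_nonneg (cdf_nonneg κ _)]
    exact cdf_le_one κ _

lemma measurableSet_forall_le {ι : Type*} [Countable ι] (i : ι) :
    MeasurableSet {x : ι → ℝ | ∀ j, x j ≤ x i} := by
  simp only [ofPred_forall]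
  exact .iInter fun j => measurableSet_le (measurable_pi_apply j) (measurable_pi_apply i)

lemma pi_forall_le_eq_pi_forall_le [SigmaFinite κ] {ι : Type*} [Fintype ι] [DecidableEq ι]
    (i i' : ι) :
    (Measure.pi fun _ : ι => κ) {x | ∀ j, x j ≤ x i} =
      (Measure.pi fun _ : ι => κ) {x | ∀ j, x j ≤ x i'} := by
  have hswap := measurePreserving_arrowCongr' (fun _ => κ) (fun _ => κ) (Equiv.swap i i')
    (MeasurableEquiv.refl ℝ) fun _ => MeasurePreserving.id κ
  rw [← hswap.measure_preimage (measurableSet_forall_le i').nullMeasurableSet]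
  congr 1
  ext x
  change (∀ j, x j ≤ x i) ↔ ∀ j, x (Equiv.swap i i' j) ≤ x (Equiv.swap i i' i')
  rw [Equiv.swap_apply_right]
  exact ((Equiv.swap i i').forall_congr_right (q := fun j => x j ≤ x i)).symm

variable [IsProbabilityMeasure κ] [NullSingletonClass κ]

/-- The events `{x | ∀ j, x j ≤ x i}` are exchangeable and overlap only on ties. -/
lemma pi_forall_le_eq_inv_card {ι : Type*} [Fintype ι] (i : ι) :
    (Measure.pi fun _ : ι => κ) {x | ∀ j, x j ≤ x i} =
      (Fintype.card ι : ℝ≥0∞)⁻¹ := by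
  classical
  have : Nonempty ι := ⟨i⟩
  set ν := Measure.pi fun _ : ι => κ
  have hcover : (⋃ k, {x : ι → ℝ | ∀ j, x j ≤ x k}) = univ :=
    eq_univ_of_forall fun x => mem_iUnion.2 (Finite.exists_max x)
  have hdisj : Pairwise (AEDisjoint ν on fun k => {x : ι → ℝ | ∀ j, x j ≤ x k}) :=
    fun k l hkl => measure_mono_null (fun x hx => le_antisymm (hx.2 k) (hx.1 l))
      (pi_eval_eq_eval_eq_zero κ hkl)
  have hsum : ∑ k, ν {x | ∀ j, x j ≤ x k} = 1 := by
    rw [← tsum_fintype (L := .unconditional ι), ← measure_iUnion₀ hdisj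
      fun k => (measurableSet_forall_le k).nullMeasurableSet, hcover, measure_univ]
  rw [Finset.sum_congr rfl fun k _ => pi_forall_le_eq_pi_forall_le κ k i, Finset.sum_const,
    Finset.card_univ, nsmul_eq_mul] at hsum
  exact ENNReal.eq_inv_of_mul_eq_one_left (by rwa [mul_comm])

lemma lintegral_measure_Iic_pow (m : ℕ) :
    ∫⁻ t, κ (Iic t) ^ m ∂κ = (m + 1 : ℝ≥0∞)⁻¹ := by
  have hS : MeasurableSet {p : ℝ × (Fin m → ℝ) | ∀ j, p.2 j ≤ p.1} := by
    simp only [ofPred_forall]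
    exact .iInter fun j => measurableSet_le (measurable_pi_apply j |>.comp measurable_snd)
      measurable_fst
  calc ∫⁻ t, κ (Iic t) ^ m ∂κ
      = (κ.prod (Measure.pi fun _ : Fin m => κ)) {p | ∀ j, p.2 j ≤ p.1} := by
        rw [Measure.prod_apply hS]
        congr with t
        rw [show Prod.mk t ⁻¹' {p : ℝ × (Fin m → ℝ) | ∀ j, p.2 j ≤ p.1} =
          univ.pi fun _ => Iic t from by ext; simp [Pi.le_def], Measure.pi_pi]
        simp
    _ = (Measure.pi fun _ : Fin (m + 1) => κ) {x | ∀ j, x j ≤ x 0} := by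
        rw [← (measurePreserving_piFinSuccAbove (fun _ => κ) 0).measure_preimage
          hS.nullMeasurableSet]
        congr with x
        simp [Fin.forall_fin_succ, Fin.tail]
    _ = (m + 1 : ℝ≥0∞)⁻¹ := by rw [pi_forall_le_eq_inv_card]; simp

lemma integral_cdf_pow (m : ℕ) : ∫ t, cdf κ t ^ m ∂κ = (m + 1 : ℝ)⁻¹ := by
  simp_rw [cdf_eq_real, measureReal_def, ← ENNReal.toReal_pow]
  have hmono : Monotone fun t => κ (Iic t) := fun _ _ h => measure_mono (Iic_subset_Iic.2 h)
  rw [integral_toReal (hmono.measurable.pow_const m).aemeasurable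
    (ae_of_all _ fun t => by finiteness), lintegral_measure_Iic_pow, ENNReal.toReal_inv]
  norm_cast

/-- `cdf κ` is uniformly distributed on `[0, 1]` under an atomless `κ`. -/
lemma variance_cdf : Var[cdf κ; κ] = 12⁻¹ := by
  have hL : MemLp (cdf κ) 2 κ := memLp_cdf_comp κ measurable_id 2
  rw [variance_eq_sub hL]
  have h1 := integral_cdf_pow κ 1
  have h2 := integral_cdf_pow κ 2
  simp only [pow_one] at h1
  simp only [Pi.pow_apply, h1, h2]
  norm_num

end Cdf

lemma MeasureTheory.MeasurePreserving.covariance_fun_comp {Ω Ω' : Type*} [MeasurableSpace Ω]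
    [MeasurableSpace Ω'] {μ : Measure Ω} {ν : Measure Ω'} {f : Ω → Ω'}
    (hf : MeasurePreserving f μ ν) {U V : Ω' → ℝ} (hU : AEStronglyMeasurable U ν)
    (hV : AEStronglyMeasurable V ν) :
    cov[fun ω => U (f ω), fun ω => V (f ω); μ] = cov[U, V; ν] := by
  rw [← hf.map_eq] at hU hV ⊢
  exact (covariance_map_fun hU hV hf.aemeasurable).symm

section ProductSample

variable {X Y : Type*} [MeasurableSpace X] [MeasurableSpace Y]
  (Px : Measure X) (Py : Measure Y) [IsProbabilityMeasure Px] [IsProbabilityMeasure Py]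

lemma measurePreserving_prodProdProdComm :
    MeasurePreserving (fun q : (X × X) × (Y × Y) => ((q.1.1, q.2.1), (q.1.2, q.2.2)))
      ((Px.prod Px).prod (Py.prod Py)) ((Px.prod Py).prod (Px.prod Py)) := by
  have hmid : MeasurePreserving (fun r : X × Y × Y => (r.2.1, (r.1, r.2.2)))
      (Px.prod (Py.prod Py)) (Py.prod (Px.prod Py)) :=
    (measurePreserving_prodAssoc Py Px Py).comp <|
      (Measure.measurePreserving_swap.prod (.id Py)).comp
        ((measurePreserving_prodAssoc Px Py Py).symm MeasurableEquiv.prodAssoc)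
  exact ((measurePreserving_prodAssoc Px Py (Px.prod Py)).symm MeasurableEquiv.prodAssoc).comp <|
    ((MeasurePreserving.id Px).prod hmid).comp (measurePreserving_prodAssoc Px Px (Py.prod Py))

variable {ι : Type*} [Fintype ι]

lemma measurePreserving_unzip :
    MeasurePreserving (fun Z : ι → X × Y => (fun i => (Z i).1, fun i => (Z i).2))
      (Measure.pi fun _ => Px.prod Py) ((Measure.pi fun _ => Px).prod (Measure.pi fun _ => Py)) :=
  measurePreserving_arrowProdEquivProdArrow X Y ι (fun _ => Px) (fun _ => Py)

lemma measurePreserving_eval_fst_eval_snd (a b : ι) :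
    MeasurePreserving (fun Z : ι → X × Y => ((Z a).1, (Z b).2))
      (Measure.pi fun _ => Px.prod Py) (Px.prod Py) :=
  ((measurePreserving_eval _ a).prod (measurePreserving_eval _ b)).comp
    (measurePreserving_unzip Px Py)

lemma measurePreserving_eval_fst_eval_snd_eval_snd (a : ι) {b d : ι} (hbd : b ≠ d) :
    MeasurePreserving (fun Z : ι → X × Y => ((Z a).1, (Z b).2, (Z d).2))
      (Measure.pi fun _ => Px.prod Py) (Px.prod (Py.prod Py)) :=
  ((measurePreserving_eval _ a).prod (measurePreserving_eval_pair Py hbd)).comp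
    (measurePreserving_unzip Px Py)

lemma measurePreserving_eval_fst_eval_fst_eval_snd {a c : ι} (hac : a ≠ c) (b : ι) :
    MeasurePreserving (fun Z : ι → X × Y => ((Z a).1, (Z c).1, (Z b).2))
      (Measure.pi fun _ => Px.prod Py) (Px.prod (Px.prod Py)) :=
  (measurePreserving_prodAssoc Px Px Py).comp <|
    ((measurePreserving_eval_pair Px hac).prod (measurePreserving_eval _ b)).comp
      (measurePreserving_unzip Px Py)

lemma measurePreserving_eval_fst_eval_snd_pair {a b c d : ι} (hac : a ≠ c) (hbd : b ≠ d) :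
    MeasurePreserving (fun Z : ι → X × Y => (((Z a).1, (Z b).2), ((Z c).1, (Z d).2)))
      (Measure.pi fun _ => Px.prod Py) ((Px.prod Py).prod (Px.prod Py)) :=
  (measurePreserving_prodProdProdComm Px Py).comp <|
    ((measurePreserving_eval_pair Px hac).prod (measurePreserving_eval_pair Py hbd)).comp
      (measurePreserving_unzip Px Py)

variable {G : X × Y → ℝ}

lemma covariance_eval_fst_eval_snd_self (hG : MemLp G 2 (Px.prod Py)) (a b : ι) :
    cov[fun Z : ι → X × Y => G ((Z a).1, (Z b).2), fun Z => G ((Z a).1, (Z b).2);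
      Measure.pi fun _ => Px.prod Py] = Var[G; Px.prod Py] := by
  rw [(measurePreserving_eval_fst_eval_snd Px Py a b).covariance_fun_comp
    hG.aestronglyMeasurable hG.aestronglyMeasurable, covariance_self hG.aemeasurable]

lemma covariance_eval_fst_eval_snd_of_ne_of_ne (hG : MemLp G 2 (Px.prod Py)) {a b c d : ι}
    (hac : a ≠ c) (hbd : b ≠ d) :
    cov[fun Z : ι → X × Y => G ((Z a).1, (Z b).2), fun Z => G ((Z c).1, (Z d).2);
      Measure.pi fun _ => Px.prod Py] = 0 :=
  ((measurePreserving_eval_fst_eval_snd_pair Px Py hac hbd).covariance_fun_comp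
    (hG.aestronglyMeasurable.comp_measurePreserving measurePreserving_fst)
    (hG.aestronglyMeasurable.comp_measurePreserving measurePreserving_snd)).trans
    (covariance_fst_snd_prod hG hG)

lemma covariance_eval_fst_eval_snd_of_ne_snd (hG : MemLp G 2 (Px.prod Py)) (a : ι) {b d : ι}
    (hbd : b ≠ d) :
    cov[fun Z : ι → X × Y => G ((Z a).1, (Z b).2), fun Z => G ((Z a).1, (Z d).2);
      Measure.pi fun _ => Px.prod Py] =
      cov[fun p : X × Y × Y => G (p.1, p.2.1), fun p => G (p.1, p.2.2); Px.prod (Py.prod Py)] :=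
  (measurePreserving_eval_fst_eval_snd_eval_snd Px Py a hbd).covariance_fun_comp
    (hG.aestronglyMeasurable.comp_measurePreserving ((MeasurePreserving.id Px).prod
      measurePreserving_fst))
    (hG.aestronglyMeasurable.comp_measurePreserving ((MeasurePreserving.id Px).prod
      measurePreserving_snd))

lemma covariance_eval_fst_eval_snd_of_ne_fst (hG : MemLp G 2 (Px.prod Py)) {a c : ι}
    (hac : a ≠ c) (b : ι) :
    cov[fun Z : ι → X × Y => G ((Z a).1, (Z b).2), fun Z => G ((Z c).1, (Z b).2);
      Measure.pi fun _ => Px.prod Py] =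
      cov[fun p : X × X × Y => G (p.2.1, p.2.2), fun p => G (p.1, p.2.2); Px.prod (Px.prod Py)] :=
  (measurePreserving_eval_fst_eval_fst_eval_snd Px Py hac.symm b).covariance_fun_comp
    (hG.aestronglyMeasurable.comp_measurePreserving measurePreserving_snd)
    (hG.aestronglyMeasurable.comp_measurePreserving ((MeasurePreserving.id Px).prod
      measurePreserving_snd))

theorem variance_sum_sub_of_derangement (hG : MemLp G 2 (Px.prod Py)) {σ : ι → ι}
    (hσ : Injective σ) (hσ_ne : ∀ i, σ i ≠ i) :
    Var[fun Z : ι → X × Y => ∑ i, (G ((Z i).1, (Z (σ i)).2) - G (Z i));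
      Measure.pi fun _ => Px.prod Py] =
      Fintype.card ι * (2 * Var[G; Px.prod Py]
        - 2 * cov[fun p : X × Y × Y => G (p.1, p.2.1), fun p => G (p.1, p.2.2);
            Px.prod (Py.prod Py)]
        - 2 * cov[fun p : X × X × Y => G (p.2.1, p.2.2), fun p => G (p.1, p.2.2);
            Px.prod (Px.prod Py)]) := by
  set U : ι → (ι → X × Y) → ℝ := fun i Z => G ((Z i).1, (Z (σ i)).2)
  set V : ι → (ι → X × Y) → ℝ := fun i Z => G ((Z i).1, (Z i).2)
  have hU : ∀ i, MemLp (U i) 2 (Measure.pi fun _ => Px.prod Py) := fun i =>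
    hG.comp_measurePreserving (measurePreserving_eval_fst_eval_snd Px Py i (σ i))
  have hV : ∀ i, MemLp (V i) 2 (Measure.pi fun _ => Px.prod Py) := fun i =>
    hG.comp_measurePreserving (measurePreserving_eval_fst_eval_snd Px Py i i)
  have hUU : ∀ i, ∑ j, cov[U i, U j; Measure.pi fun _ => Px.prod Py] = Var[G; Px.prod Py] :=
    fun i => (Fintype.sum_eq_single i fun j hj => covariance_eval_fst_eval_snd_of_ne_of_ne Px Py
      hG hj.symm (hσ.ne hj.symm)).trans (covariance_eval_fst_eval_snd_self Px Py hG i (σ i))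
  have hVV : ∀ i, ∑ j, cov[V i, V j; Measure.pi fun _ => Px.prod Py] = Var[G; Px.prod Py] :=
    fun i => (Fintype.sum_eq_single i fun j hj => covariance_eval_fst_eval_snd_of_ne_of_ne Px Py
      hG hj.symm hj.symm).trans (covariance_eval_fst_eval_snd_self Px Py hG i i)
  have hUV : ∀ i, ∑ j, cov[U i, V j; Measure.pi fun _ => Px.prod Py] =
      cov[fun p : X × Y × Y => G (p.1, p.2.1), fun p => G (p.1, p.2.2); Px.prod (Py.prod Py)]
      + cov[fun p : X × X × Y => G (p.2.1, p.2.2), fun p => G (p.1, p.2.2);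
          Px.prod (Px.prod Py)] := fun i =>
    (Fintype.sum_eq_add i (σ i) (hσ_ne i).symm fun j hj =>
      covariance_eval_fst_eval_snd_of_ne_of_ne Px Py hG (Ne.symm hj.1) (Ne.symm hj.2)).trans
      (congrArg₂ (· + ·) (covariance_eval_fst_eval_snd_of_ne_snd Px Py hG i (hσ_ne i))
        (covariance_eval_fst_eval_snd_of_ne_fst Px Py hG (hσ_ne i).symm (σ i)))
  have hsplit : (fun Z : ι → X × Y => ∑ i, (G ((Z i).1, (Z (σ i)).2) - G (Z i))) =
      fun Z => ∑ i, U i Z - ∑ i, V i Z := by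
    funext Z
    simp [U, V, Finset.sum_sub_distrib]
  rw [hsplit, variance_fun_sub (memLp_finsetSum _ fun i _ => hU i)
    (memLp_finsetSum _ fun i _ => hV i), variance_fun_sum hU, variance_fun_sum hV,
    covariance_fun_sum_fun_sum hU hV]
  simp only [hUU, hVV, hUV, Finset.sum_const, Finset.card_univ, nsmul_eq_mul]
  ring

end ProductSample

lemma cycIdx_eq_finRotate {n : ℕ} (i : Fin n) : cycIdx i = finRotate n i := by
  rw [finRotate_apply]
  ext
  simp [cycIdx, Fin.val_add]

lemma finRotate_apply_ne_self {n : ℕ} (hn : 2 ≤ n) (i : Fin n) : finRotate n i ≠ i :=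
  Equiv.Perm.mem_support.1 (by simp [support_finRotate_of_le hn])

lemma Rtilde_eq_inv_mul_sum {X Y : Type*} {n : ℕ} (F : ℝ → ℝ) (θ : X × Y → ℝ) :
    Rtilde F θ = fun Z : Fin n → X × Y =>
      (n : ℝ)⁻¹ * ∑ i, (F (θ ((Z i).1, (Z (finRotate n i)).2)) - F (θ (Z i))) := by
  funext Z
  simp only [Rtilde, cyc, cycIdx_eq_finRotate, ← mul_add, ← Finset.sum_add_distrib]
  congr 1
  exact Finset.sum_congr rfl fun i _ => by ring

lemma cdfOf_eq_cdf_map {X Y : Type*} [MeasurableSpace X] [MeasurableSpace Y]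
    {m : Measure (X × Y)} [IsProbabilityMeasure m] {θ : X × Y → ℝ} (hθ : Measurable θ) :
    cdfOf m θ = cdf (m.map θ) := by
  have := Measure.isProbabilityMeasure_map (μ := m) hθ.aemeasurable
  funext t
  rw [cdf_eq_real, measureReal_def, Measure.map_apply hθ measurableSet_Iic]
  rfl

lemma covFn_eq_covariance {Ω : Type*} [MeasurableSpace Ω] {m : Measure Ω}
    [IsProbabilityMeasure m] {f g : Ω → ℝ} (hf : MemLp f 2 m) (hg : MemLp g 2 m) :
    covFn m f g = cov[f, g; m] :=
  (covariance_eq_sub hf hg).symm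

/-- Under the null hypothesis `P_{XY} = P_X × P_Y`, for an i.i.d. sample of
size `n ≥ 3` from the product measure with cyclic permutation, and a fixed measurable `θ̂`
atomless under the product measure, `Var(R̃) = σ*²/n`, where
`σ*² = 1/6 − 2 Cov(F₂(θ̂(X₂,Y₂)), F₂(θ̂(X₁,Y₂))) − 2 Cov(F₂(θ̂(X₂,Y₂)), F₂(θ̂(X₂,Y₃)))`,
computed with `X₁, X₂` i.i.d. `P_X` and `Y₁, Y₂, Y₃` i.i.d. `P_Y`, all mutually independent. -/
theorem stmt_6 {X Y : Type*} [MeasurableSpace X] [MeasurableSpace Y]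
    (Px : Measure X) (Py : Measure Y) [IsProbabilityMeasure Px] [IsProbabilityMeasure Py]
    (θ : X × Y → ℝ) (hθ : Measurable θ)
    (hcont : ∀ t : ℝ, (Px.prod Py) {z | θ z = t} = 0)
    (n : ℕ) (hn : 3 ≤ n)
    (F₂ : ℝ → ℝ) (hF₂ : F₂ = cdfOf (Px.prod Py) θ)
    (σstarSq : ℝ)
    (hσ : σstarSq = 1 / 6
        - 2 * covFn (Px.prod (Px.prod Py))
            (fun p => F₂ (θ (p.2.1, p.2.2))) (fun p => F₂ (θ (p.1, p.2.2)))
        - 2 * covFn (Px.prod (Py.prod Py))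
            (fun p => F₂ (θ (p.1, p.2.1))) (fun p => F₂ (θ (p.1, p.2.2)))) :
    variance (Rtilde F₂ θ) (Measure.pi fun _ : Fin n => Px.prod Py) = σstarSq / n := by
  set κ := (Px.prod Py).map θ
  have : IsProbabilityMeasure κ := Measure.isProbabilityMeasure_map hθ.aemeasurable
  have : NullSingletonClass κ := ⟨fun t => by
    rw [Measure.map_apply hθ (measurableSet_singleton t)]; exact hcont t⟩
  obtain rfl : F₂ = cdf κ := hF₂.trans (cdfOf_eq_cdf_map hθ)
  have hVar : Var[fun z => cdf κ (θ z); Px.prod Py] = 12⁻¹ := by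
    rw [MeasurePreserving.variance_fun_comp ⟨hθ, rfl⟩ (cdf κ).mono.measurable.aemeasurable,
      variance_cdf]
  rw [Rtilde_eq_inv_mul_sum, variance_const_mul,
    variance_sum_sub_of_derangement Px Py (memLp_cdf_comp κ hθ 2) (finRotate n).injective
      (finRotate_apply_ne_self (by omega)),
    hVar, hσ,
    covFn_eq_covariance (memLp_cdf_comp κ (by fun_prop) 2) (memLp_cdf_comp κ (by fun_prop) 2),
    covFn_eq_covariance (memLp_cdf_comp κ (by fun_prop) 2) (memLp_cdf_comp κ (by fun_prop) 2),
    Fintype.card_fin]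
  field_simp
  ring
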